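/- arXiv:1510.06984 — 3 statements merged into one kernel-verified Lean document; each statement's English description precedes it below -/
import Mathlib

section
/- Every Lyndon-Shirshov word fully partitions; that is, for every Lyndon-Shirshov word w over a totally ordered alphabet there is a sequence of simple partitions w ↠ ω₁ ↠ ⋯ ↠ ω_ℓ ending in the trivial one-block partition. -/
/-- A word `w` over a totally ordered alphabet is a Lyndon-Shirshov word if it is nonempty and
lexicographically strictly less than every word obtained from it by a nontrivial cyclic
permutation (moving a nonempty proper prefix to the end). -/
def IsLyndon {A : Type*} [LinearOrder A] (w : List A) : Prop :=
  w ≠ [] ∧ ∀ u v : List A, u ≠ [] → v ≠ [] → w = u ++ v → w < v ++ u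

/-- For a fixed letter `b`, a `b`-simple word is a word of the form `bⁿx` with `n ≥ 0` and
`x` a single letter different from `b`. -/
def IsSimpleWord {B : Type*} (b : B) (w : List B) : Prop :=
  ∃ (n : ℕ) (x : B), x ≠ b ∧ w = List.replicate n b ++ [x]

/-- One step of simple partitioning, at the level of words of blocks (blocks are recorded by
their underlying words): `ω ↠ ω'` if `ω` can be written as a concatenation of subwords, each
of which is a `b`-simple word over the alphabet of blocks where `b` is the first block of
`ω`, and `ω'` is the resulting word whose letters are the (flattened) combined blocks. -/
def PartStep {A : Type*} (ω ω' : List (List A)) : Prop :=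
  ∃ P : List (List (List A)),
    P.flatten = ω ∧ (∀ p ∈ P, IsSimpleWord ω.headI p) ∧ ω' = P.map List.flatten

/-!
Blocks are compared as words over `A`. The blocks that occur always form a prefix code, and for
a prefix code flattening is strictly monotone for the lexicographic order; hence a word of blocks
whose flattening is the Lyndon word `w` is itself Lyndon. A Lyndon word of length at least two
does not end in its first letter `b` (it would exceed its suffix `b`), so it splits into `b`-simple
words. The new blocks `bᵐx` again form a prefix code, and there are strictly fewer of them, so
iterating ends with the single block `w`.
-/

open List Relation

theorem Relation.ReflTransGen.exists_fin_chain {α : Type*} {r : α → α → Prop} {a b : α}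
    (h : ReflTransGen r a b) :
    ∃ (ℓ : ℕ) (f : Fin (ℓ + 1) → α),
      f 0 = a ∧ (∀ i : Fin ℓ, r (f i.castSucc) (f i.succ)) ∧ f (Fin.last ℓ) = b := by
  induction h using ReflTransGen.head_induction_on with
  | refl => exact ⟨0, fun _ => b, rfl, Fin.elim0, rfl⟩
  | head hac _ ih =>
    obtain ⟨ℓ, f, hf0, hf, hfl⟩ := ih
    refine ⟨ℓ + 1, Fin.cons _ f, rfl, Fin.cases (by simpa [hf0]) fun i => ?_, hfl⟩
    simpa [← Fin.succ_castSucc] using hf i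

namespace List

variable {α : Type*}

section Lex

variable [LinearOrder α]

theorem lt_of_append_lt_append_left {l s t : List α} (h : l ++ s < l ++ t) : s < t := by
  induction l with
  | nil => exact h
  | cons a l ih => exact ih (by simpa using h)

theorem append_lt_append_of_lt_of_not_prefix {p q : List α} (h : p < q) (hpq : ¬ p <+: q)
    (s t : List α) : p ++ s < q ++ t := by
  induction p generalizing q with
  | nil => exact absurd nil_prefix hpq
  | cons a p ih =>
    cases q with
    | nil => exact absurd h (not_lt_nil _)
    | cons b q =>
      rcases cons_lt_cons_iff.mp h with hab | ⟨rfl, hpq'⟩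
      · exact cons_lt_cons_iff.mpr (Or.inl hab)
      · exact cons_lt_cons_iff.mpr (Or.inr ⟨rfl, ih hpq' (by simpa using hpq)⟩)

end Lex

def IsPrefixCode (S : Set (List α)) : Prop :=
  [] ∉ S ∧ ∀ p ∈ S, ∀ q ∈ S, p <+: q → p = q

theorem IsPrefixCode.mono {S T : Set (List α)} (hT : IsPrefixCode T) (h : S ⊆ T) :
    IsPrefixCode S :=
  ⟨fun hS => hT.1 (h hS), fun p hp q hq => hT.2 p (h hp) q (h hq)⟩

theorem IsPrefixCode.flatten_ne_nil {S : Set (List α)} (hS : IsPrefixCode S) {s : List (List α)}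
    (hs : ∀ p ∈ s, p ∈ S) (hne : s ≠ []) : s.flatten ≠ [] := by
  obtain ⟨p, hp⟩ := exists_mem_of_ne_nil s hne
  intro h
  exact hS.1 (flatten_eq_nil_iff.mp h p hp ▸ hs p hp)

theorem IsPrefixCode.flatten_lt_flatten [LinearOrder α] {S : Set (List α)} (hS : IsPrefixCode S)
    {s t : List (List α)} (hs : ∀ p ∈ s, p ∈ S) (ht : ∀ p ∈ t, p ∈ S) (h : s < t) :
    s.flatten < t.flatten := by
  induction s generalizing t with
  | nil =>
    obtain _ | ⟨q, t⟩ := t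
    · exact absurd h (not_lt_nil _)
    obtain _ | ⟨c, q⟩ := q
    · exact absurd (ht _ mem_cons_self) hS.1
    exact nil_lt_cons _ _
  | cons p s ih =>
    obtain _ | ⟨q, t⟩ := t
    · exact absurd h (not_lt_nil _)
    rcases cons_lt_cons_iff.mp h with hpq | ⟨rfl, hst⟩
    · have hnp : ¬ p <+: q := fun hp =>
        hpq.ne (hS.2 p (hs p mem_cons_self) q (ht q mem_cons_self) hp)
      simpa using append_lt_append_of_lt_of_not_prefix hpq hnp s.flatten t.flatten
    · simpa using append_left_lt (ih (fun p' hp' => hs p' (mem_cons_of_mem _ hp'))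
        (fun p' hp' => ht p' (mem_cons_of_mem _ hp')) hst)

theorem IsPrefixCode.flatten_lt_flatten_iff [LinearOrder α] {S : Set (List α)}
    (hS : IsPrefixCode S) {s t : List (List α)} (hs : ∀ p ∈ s, p ∈ S) (ht : ∀ p ∈ t, p ∈ S) :
    s.flatten < t.flatten ↔ s < t := by
  refine ⟨fun h => ?_, hS.flatten_lt_flatten hs ht⟩
  rcases lt_trichotomy s t with hst | rfl | hts
  · exact hst
  · exact absurd h (lt_irrefl _)
  · exact absurd h (hS.flatten_lt_flatten ht hs hts).asymm

theorem IsPrefixCode.eq_of_flatten_replicate_append_prefix {S : Set (List α)}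
    (hS : IsPrefixCode S) {b x y : List α} (hb : b ∈ S) (hx : x ∈ S) (hy : y ∈ S)
    (hxb : x ≠ b) (hyb : y ≠ b) {m n : ℕ}
    (h : (replicate m b).flatten ++ x <+: (replicate n b).flatten ++ y) : m = n ∧ x = y := by
  induction m generalizing n with
  | zero =>
    cases n with
    | zero => exact ⟨rfl, hS.2 x hx y hy (by simpa using h)⟩
    | succ n =>
      simp only [replicate_succ, flatten_cons, replicate_zero, flatten_nil,
        nil_append, append_assoc] at h
      rcases prefix_or_prefix_of_prefix h (prefix_append b _) with hxb' | hbx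
      · exact absurd (hS.2 x hx b hb hxb') hxb
      · exact absurd (hS.2 b hb x hx hbx).symm hxb
  | succ m ih =>
    cases n with
    | zero =>
      simp only [replicate_succ, flatten_cons, replicate_zero, flatten_nil, nil_append,
        append_assoc] at h
      exact absurd (hS.2 b hb y hy ((prefix_append _ _).trans h)).symm hyb
    | succ n =>
      simp only [replicate_succ, flatten_cons, append_assoc, prefix_append_right_inj] at h
      exact (ih h).imp_left (congrArg (· + 1))

theorem IsPrefixCode.flatten_replicate_append {S : Set (List α)} (hS : IsPrefixCode S)
    {b : List α} (hb : b ∈ S) :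
    IsPrefixCode
      {c | ∃ (m : ℕ) (x : List α), x ∈ S ∧ x ≠ b ∧ c = (replicate m b).flatten ++ x} := by
  refine ⟨fun ⟨m, x, hx, _, hc⟩ => hS.1 ?_, ?_⟩
  · rwa [(append_eq_nil_iff.mp hc.symm).2] at hx
  · rintro _ ⟨m, x, hx, hxb, rfl⟩ _ ⟨n, y, hy, hyb, rfl⟩ h
    obtain ⟨rfl, rfl⟩ := hS.eq_of_flatten_replicate_append_prefix hb hx hy hxb hyb h
    rfl

theorem exists_isSimpleWord_partition (b : α) :
    ∀ {l : List α}, ¬ [b] <:+ l → ∃ P : List (List α), P.flatten = l ∧ ∀ p ∈ P, IsSimpleWord b p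
  | [], _ => ⟨[], rfl, by simp⟩
  | x :: r, hl => by
    obtain ⟨P, rfl, hP⟩ :=
      exists_isSimpleWord_partition b (l := r) fun h => hl (h.trans (suffix_cons x _))
    by_cases hx : x = b
    · subst hx
      obtain _ | ⟨p, P⟩ := P
      · exact absurd suffix_rfl hl
      obtain ⟨n, y, hy, rfl⟩ := hP p mem_cons_self
      refine ⟨(replicate (n + 1) x ++ [y]) :: P, rfl, ?_⟩
      simp only [mem_cons, forall_eq_or_imp] at hP ⊢
      exact ⟨⟨n + 1, y, hy, rfl⟩, hP.2⟩
    · refine ⟨[x] :: P, rfl, ?_⟩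
      simp only [mem_cons, forall_eq_or_imp]
      exact ⟨⟨0, x, hx, rfl⟩, hP⟩

theorem length_lt_length_flatten_of_isSimpleWord {b : α} {P : List (List α)}
    (hP : ∀ p ∈ P, IsSimpleWord b p) (hb : P.flatten.head? = some b) :
    P.length < P.flatten.length := by
  obtain _ | ⟨p, P⟩ := P
  · simp at hb
  obtain ⟨m, x, hxb, rfl⟩ := hP p mem_cons_self
  have hm : m ≠ 0 := by
    rintro rfl
    exact hxb (by simpa using hb)
  have hP' : P.length ≤ P.flatten.length := by
    rw [length_flatten, ← length_map (f := length)]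
    refine length_le_sum_of_one_le _ fun i hi => ?_
    obtain ⟨q, hq, rfl⟩ := mem_map.mp hi
    obtain ⟨k, z, -, rfl⟩ := hP q (mem_cons_of_mem _ hq)
    simp
  simp only [flatten_cons, length_append, length_cons, length_replicate, length_flatten] at hP' ⊢
  omega

end List

section Lyndon

variable {A : Type*} [LinearOrder A]

theorem IsLyndon.lt_of_eq_append {w u v : List A} (hw : IsLyndon w) (hu : u ≠ []) (hv : v ≠ [])
    (he : w = u ++ v) : w < v := by
  have hrot : w < v ++ u := hw.2 u v hu hv he
  by_contra! hvw
  by_cases hpre : v <+: w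
  · obtain ⟨t, rfl⟩ := hpre
    have hlen : t.length = u.length := by
      have := congrArg length he
      simp only [length_append] at this
      omega
    have ht : t ≠ [] := fun ht => hu (length_eq_zero_iff.mp (ht ▸ hlen).symm)
    have htu : t < u := lt_of_append_lt_append_left hrot
    have htu' : ¬ t <+: u := fun h => htu.ne (h.eq_of_length hlen)
    refine lt_asymm (hw.2 v t hv ht rfl) ?_
    rw [he]
    exact append_lt_append_of_lt_of_not_prefix htu htu' v v
  · have hvw' : v < w := lt_of_le_of_ne hvw fun h => hpre (h ▸ prefix_refl v)
    exact lt_asymm hrot (by simpa using append_lt_append_of_lt_of_not_prefix hvw' hpre u [])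

theorem IsLyndon.not_head_suffix {b : A} {t : List A} (hw : IsLyndon (b :: t)) (ht : t ≠ []) :
    ¬ [b] <:+ b :: t := by
  rintro ⟨u, hu⟩
  have hu' : u ≠ [] := by
    rintro rfl
    exact ht (by simpa using hu.symm)
  exact (show [b] <+: b :: t from ⟨t, rfl⟩).le (hw.lt_of_eq_append hu' (cons_ne_nil _ _) hu.symm)

theorem IsLyndon.of_flatten {S : Set (List A)} (hS : IsPrefixCode S) {ω : List (List A)}
    (hω : ∀ p ∈ ω, p ∈ S) (h : IsLyndon ω.flatten) : IsLyndon ω := by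
  refine ⟨fun h0 => h.1 (by simp [h0]), fun U V hU hV hUV => ?_⟩
  subst hUV
  have hU' : ∀ p ∈ U, p ∈ S := fun p hp => hω p (mem_append_left _ hp)
  have hV' : ∀ p ∈ V, p ∈ S := fun p hp => hω p (mem_append_right _ hp)
  have hVU : ∀ p ∈ V ++ U, p ∈ S := fun p hp => hω p (mem_append.2 (mem_append.1 hp).symm)
  have hrot := h.2 _ _ (hS.flatten_ne_nil hU' hU) (hS.flatten_ne_nil hV' hV) flatten_append
  rwa [← flatten_append, hS.flatten_lt_flatten_iff hω hVU] at hrot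

theorem exists_partStep_of_isLyndon_flatten {ω : List (List A)} (hS : IsPrefixCode {p | p ∈ ω})
    (hω : IsLyndon ω.flatten) (hlen : 1 < ω.length) :
    ∃ ω', PartStep ω ω' ∧ ω'.flatten = ω.flatten ∧ IsPrefixCode {p | p ∈ ω'} ∧
      ω'.length < ω.length := by
  obtain _ | ⟨b, tl⟩ := ω
  · simp at hlen
  have htl : tl ≠ [] := by
    rintro rfl
    simp at hlen
  have hL : IsLyndon (b :: tl) := hω.of_flatten hS fun _ => id
  obtain ⟨P, hP, hsimple⟩ := exists_isSimpleWord_partition b (hL.not_head_suffix htl)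
  refine ⟨P.map flatten, ⟨P, hP, hsimple, rfl⟩, by rw [← flatten_flatten, hP],
    (hS.flatten_replicate_append mem_cons_self).mono ?_, ?_⟩
  · intro c hc
    obtain ⟨p, hp, rfl⟩ := mem_map.mp hc
    obtain ⟨m, x, hxb, rfl⟩ := hsimple p hp
    exact ⟨m, x, hP ▸ mem_flatten.mpr ⟨_, hp, by simp⟩, hxb, by simp⟩
  · rw [length_map, ← hP]
    exact length_lt_length_flatten_of_isSimpleWord hsimple (by rw [hP]; rfl)

theorem reflTransGen_partStep_of_isLyndon_flatten {ω : List (List A)}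
    (hS : IsPrefixCode {p | p ∈ ω}) (hω : IsLyndon ω.flatten) :
    ReflTransGen PartStep ω [ω.flatten] := by
  induction hn : ω.length using Nat.strong_induction_on generalizing ω with
  | _ n ih =>
    rcases lt_or_ge 1 ω.length with hlen | hlen
    · obtain ⟨ω', hstep, hflat, hS', hlen'⟩ :=
        exists_partStep_of_isLyndon_flatten hS hω hlen
      rw [← hflat]
      exact .head hstep (ih _ (hn ▸ hlen') hS' (hflat ▸ hω) rfl)
    · obtain _ | ⟨p, _ | ⟨q, ω⟩⟩ := ω
      · exact absurd rfl hω.1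
      · simpa using ReflTransGen.refl
      · simp at hlen

end Lyndon

/-- **Every Lyndon-Shirshov word fully partitions**: there is a sequence of simple partitions
`w ↠ ω₁ ↠ ⋯ ↠ ω_ℓ` starting from `w` (viewed as the word of its single letters) and ending
in the trivial one-block partition `[w]`. -/
theorem lyndonShirshov_fully_partitions {A : Type*} [LinearOrder A]
    (w : List A) (hw : IsLyndon w) :
    ∃ (ℓ : ℕ) (ωs : Fin (ℓ + 1) → List (List A)),
      ωs 0 = w.map (fun x => [x]) ∧
      (∀ i : Fin ℓ, PartStep (ωs i.castSucc) (ωs i.succ)) ∧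
      ωs (Fin.last ℓ) = [w] := by
  have hflat : (w.map fun x => [x]).flatten = w := flatMap_singleton' w
  have hS : IsPrefixCode {p | p ∈ w.map fun x => [x]} := by
    refine ⟨fun h => ?_, fun p hp q hq h => ?_⟩
    · obtain ⟨x, -, hx⟩ := mem_map.mp h
      exact cons_ne_nil _ _ hx
    · obtain ⟨x, -, rfl⟩ := mem_map.mp hp
      obtain ⟨y, -, rfl⟩ := mem_map.mp hq
      exact h.eq_of_length rfl
  obtain ⟨ℓ, ωs, h0, hstep, hlast⟩ :=
    (reflTransGen_partStep_of_isLyndon_flatten hS (by rwa [hflat])).exists_fin_chain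
  exact ⟨ℓ, ωs, h0, hstep, hflat ▸ hlast⟩
end

section
/- Let w₁ and w₂ be Lyndon-Shirshov words over a totally ordered alphabet and suppose w₁ = aⁿb is a-simple (n ≥ 1, b ≠ a). Then the configuration pairing ⟨★(w₁), ⌊w₂⌋⟩ equals n! if w₂ = w₁, and equals 0 otherwise. The same conclusion holds if instead w₂ is assumed to be a-simple. -/
open scoped Classical

/-- Lie bracket expressions in letters from `A`: the free magma on `A`. -/
inductive LieExpr (A : Type*) : Type _
  | of : A → LieExpr A
  | br : LieExpr A → LieExpr A → LieExpr A

namespace LieExpr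

variable {A : Type*}

/-- The list of letters of a Lie bracket expression (its positions, read left to right). -/
def letters : LieExpr A → List A
  | of a => [a]
  | br h k => h.letters ++ k.letters

/-- The number of positions of a Lie bracket expression. -/
def size : LieExpr A → ℕ
  | of _ => 1
  | br h k => h.size + k.size

/-- For each sub-bracket `[H,K]` of the expression (placed at offset `i`), the pair of
position intervals (recorded as `(start, length)`) occupied by `H` and by `K`. -/
def intervals : LieExpr A → ℕ → List ((ℕ × ℕ) × (ℕ × ℕ))
  | of _, _ => []
  | br h k, i =>
      ((i, h.size), (i + h.size, k.size)) :: (h.intervals i ++ k.intervals (i + h.size))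

/-- `iterBr L n K = [L,[L,…,[L,K]…]]` with `n` copies of `L`. -/
def iterBr (L : LieExpr A) : ℕ → LieExpr A → LieExpr A
  | 0, K => K
  | n + 1, K => br L (iterBr L n K)

end LieExpr

/-- A finite directed graph with vertices labeled by letters from `A`. -/
structure LGraph (A : Type*) where
  V : Type
  [instFintype : Fintype V]
  [instDecEq : DecidableEq V]
  edges : Finset (V × V)
  label : V → A

attribute [instance] LGraph.instFintype LGraph.instDecEq

namespace LGraph

variable {A : Type*}

/-- The full subgraph of `G` on the vertex set `S` is connected: `S` is nonempty and any two
vertices of `S` are joined by a path of edges of `G` lying inside `S` (ignoring directions). -/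
def ConnOn (G : LGraph A) (S : Finset G.V) : Prop :=
  S.Nonempty ∧ ∀ x ∈ S, ∀ y ∈ S,
    Relation.ReflTransGen (fun u v => u ∈ S ∧ v ∈ S ∧ ((u, v) ∈ G.edges ∨ (v, u) ∈ G.edges)) x y

/-- The edges of `G` joining the vertex sets `S` and `T` (in either direction). -/
def between (G : LGraph A) (S T : Finset G.V) : Finset (G.V × G.V) :=
  G.edges.filter fun e => (e.1 ∈ S ∧ e.2 ∈ T) ∨ (e.1 ∈ T ∧ e.2 ∈ S)

end LGraph

section Pairing

variable {A : Type*}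

/-- The set of vertices sent by `σ` to positions in the interval `[st, st + len)`. -/
def posSet (G : LGraph A) {m : ℕ} (σ : G.V ≃ Fin m) (st len : ℕ) : Finset G.V :=
  Finset.univ.filter fun v => st ≤ (σ v : ℕ) ∧ (σ v : ℕ) < st + len

/-- The condition for the `σ`-configuration pairing to be nonzero: for every sub-bracket
`[H,K]` of `L`, the full subgraphs of `G` on `σ⁻¹H` and on `σ⁻¹K` are both connected and
there is exactly one edge of `G` between them. -/
def Good (G : LGraph A) (L : LieExpr A) (σ : G.V ≃ Fin L.letters.length) : Prop :=
  ∀ q ∈ L.intervals 0,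
    G.ConnOn (posSet G σ q.1.1 q.1.2) ∧ G.ConnOn (posSet G σ q.2.1 q.2.2) ∧
      (G.between (posSet G σ q.1.1 q.1.2) (posSet G σ q.2.1 q.2.2)).card = 1

/-- The `σ`-configuration pairing `⟨G, L⟩_σ`: zero unless `σ` is good, and otherwise `(-1)ⁿ`
where `n` is the number of edges of `G` pointing (under `σ`) from right to left in `L`. -/
noncomputable def pairingAt (G : LGraph A) (L : LieExpr A)
    (σ : G.V ≃ Fin L.letters.length) : ℤ :=
  if Good G L σ then
    (-1 : ℤ) ^ (G.edges.filter fun e => (σ e.2 : ℕ) < (σ e.1 : ℕ)).card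
  else 0

/-- The finite set of label-preserving bijections from the vertices of `G` to the
positions of `L`. -/
noncomputable def Bijections (G : LGraph A) (L : LieExpr A) :
    Finset (G.V ≃ Fin L.letters.length) :=
  Finset.univ.filter fun σ => ∀ v, G.label v = L.letters.get (σ v)

/-- The configuration pairing `⟨G, L⟩`: the sum of `⟨G, L⟩_σ` over all label-preserving
bijections `σ`. -/
noncomputable def pairing (G : LGraph A) (L : LieExpr A) : ℤ :=
  ∑ σ ∈ Bijections G L, pairingAt G L σ

end Pairing

/-- Trees recording the nested structure of a fully partitioned word: a fully partitioned
word is either a single letter or `αⁿχ` (`n ≥ 1`) where `α` and `χ` are fully partitioned. -/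
inductive FP (A : Type*) : Type _
  | letter : A → FP A
  | node : FP A → ℕ → FP A → FP A

namespace FP

variable {A : Type*}

/-- The underlying word of a fully-partitioned-word tree. -/
def word : FP A → List A
  | letter x => [x]
  | node α n χ => (List.replicate n α.word).flatten ++ χ.word

/-- `IsBlock b t`: `t` is (the tree of) a valid block of the level for which `b` is the base
(i.e. `b` is the first block of the previous level): either `t = bʲu` with `j ≥ 1` and `u` a
block of the previous level, `u ≠ b`; or (collapsed case, `j = 0`) `t` is itself a block of
the previous level different from `b`. -/
def IsBlock : FP A → FP A → Prop
  | letter a, t =>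
      (∃ j x, 1 ≤ j ∧ t = node (letter a) j (letter x) ∧ x ≠ a) ∨
      (∃ x, t = letter x ∧ x ≠ a)
  | node c m v, t =>
      (∃ j u, 1 ≤ j ∧ t = node (node c m v) j u ∧ IsBlock c u ∧ u ≠ node c m v) ∨
      (IsBlock c t ∧ t ≠ node c m v)

/-- `IsBlockUnder b u` : `u` is a block of the level of `b` itself (a single letter when `b`
is a letter, and a block over the base of `b` otherwise). -/
def IsBlockUnder : FP A → FP A → Prop
  | letter _, u => ∃ x, u = letter x
  | node c _ _, u => IsBlock c u

/-- `t.Valid`: `t` is the tree of nested simple partitions of a word which fully partitions: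
each node is `αⁿχ` with `n ≥ 1`, where `α` (the base, i.e. the first block of its level) is
itself valid, and `χ` is a block of the same level as `α` with `χ ≠ α`. -/
def Valid : FP A → Prop
  | letter _ => True
  | node c m v => Valid c ∧ 1 ≤ m ∧ IsBlockUnder c v ∧ v ≠ c

/-- The left-greedy bracketing `⌊w⌋` of a fully partitioned word:
`⌊x⌋ = x`, and `⌊αⁿχ⌋ = [⌊α⌋,[⌊α⌋,…,[⌊α⌋,⌊χ⌋]…]]`. -/
def bracket : FP A → LieExpr A
  | letter x => .of x
  | node α n χ => LieExpr.iterBr α.bracket n χ.bracket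

end FP

/-- A finite directed labeled graph with a distinguished anchor vertex. -/
structure AGraph (A : Type*) extends LGraph A where
  anchor : V

namespace FP

variable {A : Type*}

/-- The star graph `★(w)` of a fully partitioned word: `★(x)` is a single anchor vertex
labeled `x`; `★(αⁿχ)` consists of `n` disjoint copies of `★(α)` and one copy of `★(χ)`,
with an edge from the anchor of each copy of `★(α)` to the anchor of `★(χ)`, which is the
anchor of the whole graph. -/
def star : FP A → AGraph A
  | letter x => { V := PUnit, edges := ∅, label := fun _ => x, anchor := PUnit.unit }
  | node α n χ =>
      let Gα := star α
      let Gχ := star χ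
      { V := (Fin n × Gα.V) ⊕ Gχ.V
        edges :=
          ((Finset.univ ×ˢ Gα.edges).image fun p =>
              (Sum.inl (p.1, p.2.1), Sum.inl (p.1, p.2.2))) ∪
          (Gχ.edges.image fun e => (Sum.inr e.1, Sum.inr e.2)) ∪
          (Finset.univ.image fun k : Fin n => (Sum.inl (k, Gα.anchor), Sum.inr Gχ.anchor))
        label := Sum.elim (fun p => Gα.label p.2) Gχ.label
        anchor := Sum.inr Gχ.anchor }

end FP

/-!
A label-preserving bijection `★(w₁) → ⌊w₂⌋` exists only if `w₂` is an anagram of `w₁`, and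
the only Lyndon anagram of `aⁿb` (where necessarily `a < b`) is `aⁿb` itself; so the pairing
vanishes unless `w₁ = w₂ = aⁿb`. A fully partitioned word equal to `aⁿb` is the simple word
itself, since a nested base would put two distinct letters into a proper prefix of `aⁿb`.
Then `★(w₁)` is a star with `n` leaves `a` pointing to a centre `b`, and
`⌊w₁⌋ = [a,[a,…,[a,b]…]]`. A bijection preserves labels iff it puts the centre last; each such
bijection splits every sub-bracket `[a, K]` into one leaf and a set containing the centre,
so it is good, and no edge points leftwards: each of the `n!` bijections contributes `1`.
-/

section Lyndon

variable {A : Type*} [LinearOrder A]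

lemma IsLyndon.lt_of_replicate_append {a b : A} {n : ℕ} (hn : 1 ≤ n) (hba : b ≠ a)
    (hw : IsLyndon (List.replicate n a ++ [b])) : a < b := by
  obtain ⟨m, rfl⟩ : ∃ m, n = m + 1 := ⟨n - 1, by omega⟩
  have h := hw.2 (List.replicate (m + 1) a) [b] (by simp) (by simp) rfl
  rw [List.replicate_succ, List.cons_append, List.singleton_append, List.cons_lt_cons_iff] at h
  exact h.resolve_right (fun h' => hba h'.1.symm)

lemma IsLyndon.eq_of_perm_replicate_append {a b : A} (hab : a < b) {n : ℕ} {w : List A}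
    (hw : IsLyndon w) (hp : w.Perm (List.replicate n a ++ [b])) :
    w = List.replicate n a ++ [b] := by
  obtain ⟨u, v, rfl⟩ := List.append_of_mem (hp.mem_iff.2 (by simp : b ∈ List.replicate n a ++ [b]))
  have huv : u ++ v = List.replicate n a := by
    rw [← List.perm_replicate]
    refine (List.perm_middle.symm.trans (hp.trans ?_)).cons_inv
    exact List.perm_append_comm
  obtain ⟨hlen, hu, hv⟩ := List.append_eq_replicate_iff.1 huv
  rw [hu, hv] at hw ⊢
  rcases Nat.eq_zero_or_pos v.length with hv0 | hvpos
  · simp [hv0, ← hlen]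
  · exfalso
    obtain ⟨j, hj⟩ : ∃ j, v.length = j + 1 := ⟨v.length - 1, by omega⟩
    have hrot := hw.2 (List.replicate u.length a ++ [b]) (List.replicate v.length a)
      (by simp) (by simp [hj]) (by simp)
    have hrot' : List.replicate v.length a ++ (List.replicate u.length a ++ [b]) =
        List.replicate u.length a ++ a :: (List.replicate j a ++ [b]) := by
      rw [← List.append_assoc, ← List.replicate_add, hj, ← List.cons_append,
        ← List.replicate_succ, ← List.append_assoc, ← List.replicate_add, Nat.add_comm]
    rw [hrot'] at hrot
    exact lt_asymm hrot (List.append_left_lt (List.cons_lt_cons_iff.2 (Or.inl hab)))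

end Lyndon

namespace LieExpr

variable {A : Type*}

lemma letters_iterBr (L K : LieExpr A) : ∀ n : ℕ,
    (iterBr L n K).letters = (List.replicate n L.letters).flatten ++ K.letters
  | 0 => rfl
  | n + 1 => by
    simp [iterBr, letters, letters_iterBr L K n, List.replicate_succ]

lemma letters_iterBr_of (a b : A) (n : ℕ) :
    (iterBr (of a) n (of b)).letters = List.replicate n a ++ [b] := by
  simp [letters_iterBr, letters]

lemma size_iterBr_of (a b : A) : ∀ n : ℕ, (iterBr (of a) n (of b)).size = n + 1
  | 0 => rfl
  | n + 1 => by rw [iterBr, size, size_iterBr_of a b n, size]; omega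

lemma mem_intervals_iterBr_of (a b : A) : ∀ (n i : ℕ) (q : (ℕ × ℕ) × (ℕ × ℕ)),
    q ∈ (iterBr (of a) n (of b)).intervals i ↔ ∃ j < n, q = ((i + j, 1), (i + j + 1, n - j))
  | 0, i, q => by simp [iterBr, intervals]
  | n + 1, i, q => by
    simp only [iterBr, intervals, size, size_iterBr_of, List.nil_append, List.mem_cons,
      mem_intervals_iterBr_of a b n (i + 1) q]
    constructor
    · rintro (rfl | ⟨j, hj, rfl⟩)
      · exact ⟨0, by omega, by simp⟩
      · exact ⟨j + 1, by omega, by simp only [Prod.mk.injEq, and_true]; omega⟩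
    · rintro ⟨_ | j, hj, rfl⟩
      · simp
      · exact Or.inr ⟨j, by omega, by simp only [Prod.mk.injEq, and_true]; omega⟩

lemma length_letters_iterBr_of (a b : A) (n : ℕ) :
    (iterBr (of a) n (of b)).letters.length = n + 1 := by
  simp [letters_iterBr_of]

end LieExpr

namespace FP

variable {A : Type*}

lemma word_ne_nil : ∀ t : FP A, t.word ≠ []
  | letter _ => List.cons_ne_nil _ _
  | node _ _ χ => by simp [word, word_ne_nil χ]

lemma word_node_succ (α χ : FP A) (n : ℕ) :
    (node α (n + 1) χ).word = α.word ++ (node α n χ).word := by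
  simp [word, List.replicate_succ]

lemma Valid.exists_mem_word_ne : ∀ {c : FP A} {k : ℕ} {v : FP A},
    (node c k v).Valid → ∀ x : A, ∃ y ∈ (node c k v).word, y ≠ x
  | letter z, k + 1, letter y, ⟨_, _, _, hne⟩, x => by
    have hyz : y ≠ z := fun h => hne (h ▸ rfl)
    by_cases hzx : z = x
    · exact ⟨y, by simp [word], hzx ▸ hyz⟩
    · exact ⟨z, by simp [word], hzx⟩
  | node _ _ _, k + 1, _, ⟨hc, _, _, _⟩, x => by
    obtain ⟨y, hy, hyx⟩ := hc.exists_mem_word_ne x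
    exact ⟨y, by rw [word_node_succ]; exact List.mem_append_left _ hy, hyx⟩

lemma Valid.eq_node_letter_of_word_eq {a b : A} {n : ℕ} (hn : 1 ≤ n) :
    ∀ {t : FP A}, t.Valid → t.word = List.replicate n a ++ [b] →
      t = node (letter a) n (letter b)
  | letter _, _, hw => by
    have := congrArg List.length hw
    simp [word] at this
    omega
  | node (letter z) m v, ⟨_, _, ⟨y, hy⟩, _⟩, hw => by
    subst hy
    have hw' : List.replicate m z ++ [y] = List.replicate n a ++ [b] := by
      simpa [word] using hw
    obtain ⟨hza, hyb⟩ := List.append_inj' hw' rfl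
    obtain ⟨rfl, hz⟩ := List.replicate_inj.1 hza
    rw [hz.resolve_left (by omega), List.singleton_inj.1 hyb]
  | node (node c k u) (m + 1) v, ⟨hc, _, _, _⟩, hw => by
    exfalso
    obtain ⟨y, hy, hya⟩ := hc.exists_mem_word_ne a
    rw [word_node_succ] at hw
    have hpre : (node c k u).word <+: List.replicate n a := by
      have hlen := congrArg List.length hw
      have := List.length_pos_iff.2 (word_ne_nil (node (node c k u) m v))
      simp only [List.length_append, List.length_replicate, List.length_singleton] at hlen
      rw [← List.isPrefix_append_of_length (l₃ := [b]) (by simp; omega), ← hw]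
      exact List.prefix_append _ _
    exact hya (List.eq_of_mem_replicate (hpre.subset hy))

lemma letters_bracket : ∀ t : FP A, t.bracket.letters = t.word
  | letter _ => rfl
  | node α _ χ => by
    rw [bracket, LieExpr.letters_iterBr, letters_bracket α, letters_bracket χ, word]

lemma sum_label_star : ∀ t : FP A, ∑ v, {t.star.label v} = (t.word : Multiset A)
  | letter _ => rfl
  | node α n χ => by
    have hα := sum_label_star α
    have hχ := sum_label_star χ
    have hrep : ((List.replicate n α.word).flatten : Multiset A) = n • (α.word : Multiset A) := by
      induction n with
      | zero => rfl
      | succ n ih =>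
        rw [List.replicate_succ, List.flatten_cons, ← Multiset.coe_add, ih, succ_nsmul']
    change ∑ v : (Fin n × α.star.V) ⊕ χ.star.V,
      {Sum.elim (fun p => α.star.label p.2) χ.star.label v} = _
    rw [Fintype.sum_sum_type, Fintype.sum_prod_type]
    simp only [Sum.elim_inl, Sum.elim_inr, hα, hχ, Finset.sum_const, Finset.card_univ,
      Fintype.card_fin, word, ← Multiset.coe_add, hrep]

end FP

lemma sum_label_eq_letters_of_mem_bijections {A : Type*} {G : LGraph A} {L : LieExpr A}
    {σ : G.V ≃ Fin L.letters.length} (hσ : σ ∈ Bijections G L) :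
    ∑ v, {G.label v} = (L.letters : Multiset A) := by
  have hlabel : ∀ v, G.label v = L.letters.get (σ v) := (Finset.mem_filter.1 hσ).2
  simp only [hlabel]
  rw [Equiv.sum_comp σ (fun i => {L.letters.get i})]
  simpa using Multiset.sum_map_singleton (L.letters : Multiset A)

lemma Fintype.card_subtype_equiv_apply_eq {α β : Type*} [Fintype α] [Fintype β] [DecidableEq α]
    [DecidableEq β] (e : α ≃ β) (a : α) (b : β) :
    Fintype.card {σ : α ≃ β // σ a = b} = (Fintype.card α - 1).factorial := by
  have hfix : {σ : α ≃ β // σ a = b} ≃ ({x // x ≠ a} ≃ {y // y ≠ b}) :=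
    ((Equiv.equivCongr (Equiv.optionSubtypeNe a).symm (Equiv.refl β)).subtypeEquiv
      (fun σ => by simp)).trans (Equiv.optionSubtype b)
  have hne : {x // x ≠ a} ≃ {y // y ≠ b} :=
    Fintype.equivOfCardEq (by simp [Fintype.card_subtype_compl, Fintype.card_congr e])
  rw [Fintype.card_congr hfix, Fintype.card_equiv hne, Fintype.card_subtype_compl,
    Fintype.card_subtype_eq]

namespace LGraph

variable {A : Type*} (G : LGraph A)

lemma connOn_singleton (v : G.V) : G.ConnOn {v} :=
  ⟨Finset.singleton_nonempty v, fun x hx y hy => by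
    rw [Finset.mem_singleton.1 hx, Finset.mem_singleton.1 hy]⟩

lemma connOn_of_forall_edge_to {S : Finset G.V} {c : G.V} (hc : c ∈ S)
    (h : ∀ x ∈ S, x ≠ c → (x, c) ∈ G.edges) : G.ConnOn S := by
  refine ⟨⟨c, hc⟩, fun x hx y hy => Relation.ReflTransGen.trans (b := c) ?_ ?_⟩
  · by_cases hxc : x = c
    · exact hxc ▸ .refl
    · exact .single ⟨hx, hc, Or.inl (h x hx hxc)⟩
  · by_cases hyc : y = c
    · exact hyc ▸ .refl
    · exact .single ⟨hc, hy, Or.inr (h y hy hyc)⟩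

end LGraph

section StarPairing

variable {A : Type*}

lemma mem_posSet {G : LGraph A} {m : ℕ} {σ : G.V ≃ Fin m} {st len : ℕ} {v : G.V} :
    v ∈ posSet G σ st len ↔ st ≤ (σ v : ℕ) ∧ (σ v : ℕ) < st + len := by
  simp [posSet]

lemma posSet_one {G : LGraph A} {m : ℕ} (σ : G.V ≃ Fin m) (j : Fin m) :
    posSet G σ j 1 = {σ.symm j} := by
  ext v
  rw [mem_posSet, Finset.mem_singleton, Equiv.eq_symm_apply, Fin.ext_iff]
  omega

variable {G : LGraph A} {a b : A} {n : ℕ} {c : G.V}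

lemma mem_bijections_iterBr_of_iff (hab : a ≠ b) (hlabel : ∀ v, G.label v = if v = c then b else a)
    (σ : G.V ≃ Fin (LieExpr.iterBr (.of a) n (.of b)).letters.length) :
    σ ∈ Bijections G (LieExpr.iterBr (.of a) n (.of b)) ↔ (σ c : ℕ) = n := by
  have hlt : ∀ v, (σ v : ℕ) < n + 1 :=
    fun v => (σ v).2.trans_eq (LieExpr.length_letters_iterBr_of a b n)
  have hget : ∀ i, (LieExpr.iterBr (.of a) n (.of b)).letters.get i =
      if (i : ℕ) < n then a else b := by
    simp [LieExpr.letters_iterBr_of, List.getElem_append]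
  simp only [Bijections, Finset.mem_filter, Finset.mem_univ, true_and, hlabel, hget]
  constructor
  · intro h
    have hc := h c
    rw [if_pos rfl] at hc
    split_ifs at hc with hcn
    · exact absurd hc.symm hab
    · exact le_antisymm (Nat.lt_succ_iff.1 (hlt c)) (not_lt.1 hcn)
  · intro hc v
    by_cases hv : v = c
    · rw [if_pos hv, if_neg (by rw [hv, hc]; exact lt_irrefl n)]
    · have hvn : (σ v : ℕ) ≠ n := fun h => hv (σ.injective (Fin.ext (h.trans hc.symm)))
      rw [if_neg hv, if_pos (by have := hlt v; omega)]

lemma good_iterBr_of (hedges : ∀ e, e ∈ G.edges ↔ e.1 ≠ c ∧ e.2 = c)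
    {σ : G.V ≃ Fin (LieExpr.iterBr (.of a) n (.of b)).letters.length} (hσ : (σ c : ℕ) = n) :
    Good G (LieExpr.iterBr (.of a) n (.of b)) σ := by
  intro q hq
  obtain ⟨j, hj, rfl⟩ := (LieExpr.mem_intervals_iterBr_of a b n 0 q).1 hq
  simp only [Nat.zero_add]
  have hj' : j < (LieExpr.iterBr (.of a) n (.of b)).letters.length := by
    rw [LieExpr.length_letters_iterBr_of]; omega
  set x := σ.symm ⟨j, hj'⟩
  have hxj : posSet G σ j 1 = {x} := posSet_one σ ⟨j, hj'⟩
  have hxc : x ≠ c := fun h => by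
    have := congrArg (fun v => (σ v : ℕ)) h
    simp only [x, Equiv.apply_symm_apply, hσ] at this
    omega
  have hcK : c ∈ posSet G σ (j + 1) (n - j) := by
    rw [mem_posSet, hσ]
    omega
  refine ⟨hxj ▸ G.connOn_singleton x,
    G.connOn_of_forall_edge_to hcK fun y _ hyc => (hedges _).2 ⟨hyc, rfl⟩, ?_⟩
  suffices G.between {x} (posSet G σ (j + 1) (n - j)) = {(x, c)} by
    rw [hxj, this, Finset.card_singleton]
  ext ⟨u, v⟩
  simp only [LGraph.between, Finset.mem_filter, Finset.mem_singleton, hedges, Prod.mk.injEq]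
  constructor
  · rintro ⟨⟨hu, rfl⟩, ⟨rfl, -⟩ | ⟨-, rfl⟩⟩
    · exact ⟨rfl, rfl⟩
    · exact absurd rfl hxc
  · rintro ⟨rfl, rfl⟩
    exact ⟨⟨hxc, rfl⟩, Or.inl ⟨rfl, hcK⟩⟩

lemma pairingAt_iterBr_of (hedges : ∀ e, e ∈ G.edges ↔ e.1 ≠ c ∧ e.2 = c)
    {σ : G.V ≃ Fin (LieExpr.iterBr (.of a) n (.of b)).letters.length} (hσ : (σ c : ℕ) = n) :
    pairingAt G (LieExpr.iterBr (.of a) n (.of b)) σ = 1 := by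
  rw [pairingAt, if_pos (good_iterBr_of hedges hσ)]
  suffices G.edges.filter (fun e => (σ e.2 : ℕ) < σ e.1) = ∅ by
    rw [this, Finset.card_empty, pow_zero]
  refine Finset.filter_eq_empty_iff.2 fun e he => ?_
  rw [((hedges e).1 he).2, hσ, not_lt]
  exact Nat.lt_succ_iff.1 ((σ e.1).2.trans_eq (LieExpr.length_letters_iterBr_of a b n))

lemma pairing_iterBr_of (hab : a ≠ b) (hcard : Fintype.card G.V = n + 1)
    (hlabel : ∀ v, G.label v = if v = c then b else a)
    (hedges : ∀ e, e ∈ G.edges ↔ e.1 ≠ c ∧ e.2 = c) :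
    pairing G (LieExpr.iterBr (.of a) n (.of b)) = n.factorial := by
  have hlen := LieExpr.length_letters_iterBr_of a b n
  have hbij : Bijections G (LieExpr.iterBr (.of a) n (.of b)) =
      Finset.univ.filter fun σ => σ c = ⟨n, by omega⟩ := by
    ext σ
    simp [mem_bijections_iterBr_of_iff hab hlabel, Fin.ext_iff]
  rw [pairing, Finset.sum_congr rfl fun σ hσ => pairingAt_iterBr_of hedges
      ((mem_bijections_iterBr_of_iff hab hlabel σ).1 hσ), Finset.sum_const, nsmul_one, hbij,
    ← Fintype.card_subtype, Fintype.card_subtype_equiv_apply_eq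
      (Fintype.equivFinOfCardEq (hcard.trans hlen.symm)), hcard, Nat.add_sub_cancel]

end StarPairing

namespace FP

variable {A : Type*}

lemma mem_edges_star_node {α χ : FP A} {n : ℕ}
    {e : (node α n χ).star.V × (node α n χ).star.V} :
    e ∈ (node α n χ).star.edges ↔
      (∃ p : Fin n × (α.star.V × α.star.V),
        p.2 ∈ α.star.edges ∧ (.inl (p.1, p.2.1), .inl (p.1, p.2.2)) = e) ∨
      (∃ f ∈ χ.star.edges, (.inr f.1, .inr f.2) = e) ∨
      ∃ k, (.inl (k, α.star.anchor), .inr χ.star.anchor) = e := by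
  -- the vertex type of `★(αⁿχ)` is a sum type only up to unfolding `star`, hence `erw`
  erw [Finset.mem_union, Finset.mem_union, Finset.mem_image, Finset.mem_image, Finset.mem_image]
  simp only [Finset.mem_product, Finset.mem_univ, true_and, or_assoc]
  exact Iff.rfl

lemma pairing_star_bracket_node_letter {a b : A} (hab : a ≠ b) (n : ℕ) :
    pairing (node (letter a) n (letter b)).star.toLGraph (node (letter a) n (letter b)).bracket =
      n.factorial := by
  refine pairing_iterBr_of (c := Sum.inr PUnit.unit) hab ?_ ?_ ?_
  · rw [Fintype.card_eq_nat_card]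
    simp [star]
  · rintro (⟨k, ⟨⟩⟩ | ⟨⟩) <;> rfl
  · rintro ⟨u, v⟩
    constructor
    · intro h
      rcases mem_edges_star_node.1 h with ⟨_, hf, -⟩ | ⟨_, hf, -⟩ | ⟨k, hk⟩
      · exact absurd hf (Finset.notMem_empty _)
      · exact absurd hf (Finset.notMem_empty _)
      · cases hk
        exact ⟨Sum.inl_ne_inr, rfl⟩
    · rintro ⟨hu, rfl⟩
      rcases u with ⟨k, ⟨⟩⟩ | ⟨⟨⟩⟩
      · exact mem_edges_star_node.2 (Or.inr (Or.inr ⟨k, rfl⟩))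
      · exact absurd rfl hu

lemma pairing_star_bracket_eq_zero_of_not_perm {t₁ t₂ : FP A} (h : ¬ t₁.word.Perm t₂.word) :
    pairing t₁.star.toLGraph t₂.bracket = 0 := by
  refine Finset.sum_eq_zero fun σ hσ => absurd ?_ h
  have hlabels := sum_label_eq_letters_of_mem_bijections hσ
  rw [sum_label_star, letters_bracket] at hlabels
  exact Multiset.coe_eq_coe.1 hlabels

lemma pairing_star_bracket_of_simple [LinearOrder A] {t₁ t₂ : FP A}
    (hv₁ : t₁.Valid) (hv₂ : t₂.Valid) (hw₁ : IsLyndon t₁.word) (hw₂ : IsLyndon t₂.word)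
    {a b : A} {n : ℕ} (hn : 1 ≤ n) (hba : b ≠ a)
    (hs : t₁.word = List.replicate n a ++ [b] ∨ t₂.word = List.replicate n a ++ [b]) :
    pairing t₁.star.toLGraph t₂.bracket = if t₁.word = t₂.word then (n.factorial : ℤ) else 0 := by
  have hab : a < b := by
    rcases hs with hs | hs
    · exact (hs ▸ hw₁).lt_of_replicate_append hn hba
    · exact (hs ▸ hw₂).lt_of_replicate_append hn hba
  split_ifs with h
  · obtain ⟨hs₁, hs₂⟩ : t₁.word = List.replicate n a ++ [b] ∧
        t₂.word = List.replicate n a ++ [b] := by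
      rcases hs with hs | hs
      exacts [⟨hs, h ▸ hs⟩, ⟨h ▸ hs, hs⟩]
    rw [hv₁.eq_node_letter_of_word_eq hn hs₁, hv₂.eq_node_letter_of_word_eq hn hs₂]
    exact pairing_star_bracket_node_letter hab.ne n
  · refine pairing_star_bracket_eq_zero_of_not_perm fun hp => h ?_
    rcases hs with hs | hs
    · rw [hs, hw₂.eq_of_perm_replicate_append hab (hs ▸ hp.symm)]
    · rw [hs, hw₁.eq_of_perm_replicate_append hab (hs ▸ hp)]

end FP

/-- **Base case of the basis theorem**: if `w₁` and `w₂` are Lyndon-Shirshov words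
(with their full partitions `t₁`, `t₂`) and one of them is an `a`-simple word `aⁿb`
(`n ≥ 1`, `b ≠ a`), then the configuration pairing `⟨★(w₁), ⌊w₂⌋⟩` equals `n!` when
`w₂ = w₁` and equals `0` otherwise. -/
theorem pairing_star_bracket_simple {A : Type*} [LinearOrder A] (t₁ t₂ : FP A)
    (hv₁ : t₁.Valid) (hv₂ : t₂.Valid)
    (hw₁ : IsLyndon t₁.word) (hw₂ : IsLyndon t₂.word) :
    (∀ (a b : A) (n : ℕ), 1 ≤ n → b ≠ a → t₁.word = List.replicate n a ++ [b] →
      pairing t₁.star.toLGraph t₂.bracket =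
        if t₂.word = t₁.word then (Nat.factorial n : ℤ) else 0) ∧
    (∀ (a b : A) (n : ℕ), 1 ≤ n → b ≠ a → t₂.word = List.replicate n a ++ [b] →
      pairing t₁.star.toLGraph t₂.bracket =
        if t₁.word = t₂.word then (Nat.factorial n : ℤ) else 0) := by
  refine ⟨fun a b n hn hba hw => ?_, fun a b n hn hba hw =>
    FP.pairing_star_bracket_of_simple hv₁ hv₂ hw₁ hw₂ hn hba (.inr hw)⟩
  rw [FP.pairing_star_bracket_of_simple hv₁ hv₂ hw₁ hw₂ hn hba (.inl hw)]
  exact if_congr eq_comm rfl rfl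
end

section
/- For every finite directed graph G with letter-labeled vertices, the configuration pairing vanishes on anti-commutativity and Jacobi combinations of Lie bracket expressions: ⟨G, [H,K]⟩ + ⟨G, [K,H]⟩ = 0 and ⟨G, [H,[K,M]]⟩ + ⟨G, [M,[H,K]]⟩ + ⟨G, [K,[M,H]]⟩ = 0 for all Lie bracket expressions H, K, M in letters of the alphabet; consequently, for each graph G the configuration pairing ⟨G, −⟩ induces a well-defined linear functional on the free Lie algebra on the alphabet. -/
open scoped Classical

/-- Interpretation of a Lie bracket expression in the free Lie algebra over `ℚ`. -/
noncomputable def LieExpr.toLie {A : Type*} : LieExpr A → FreeLieAlgebra ℚ A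
  | .of a => FreeLieAlgebra.of ℚ a
  | .br h k => ⁅h.toLie, k.toLie⁆

/-!
Both relations are proved inside an arbitrary context `C[·]`, since the relations defining the
free Lie algebra are closed under brackets.

Antisymmetry: exchanging the blocks of positions of `H` and `K` turns the good bijections for
`C[[H,K]]` into those for `C[[K,H]]`; every sub-bracket keeps its vertex set, and exactly the
edges between `H` and `K` (there is one) change direction, so the signs are opposite.

Jacobi: in a good bijection for `C[[X,[Y,Z]]]` the unique edge leaving `X` ends in `Y` or in `Z`.
Moving the block of `X` to the end turns the bijections of the second kind for `C[[X,[Y,Z]]]`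
into those of the first kind for `C[[Y,[Z,X]]]`, with opposite signs, so the six partial sums
of the three cyclic rotations cancel in pairs.

Finally the pairing extends linearly to the free non-associative algebra, and the two relations
in every context say that this functional vanishes on the relations defining the free Lie
algebra.
-/

namespace LieExpr

variable {A : Type*}

theorem length_letters (X : LieExpr A) : X.letters.length = X.size := by
  induction X with
  | of => rfl
  | br h k ihh ihk => simp [letters, size, ihh, ihk]

inductive Ctx (A : Type*) : Type _
  | hole : Ctx A
  | brL : Ctx A → LieExpr A → Ctx A
  | brR : LieExpr A → Ctx A → Ctx A

namespace Ctx

def plug : Ctx A → LieExpr A → LieExpr A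
  | hole, E => E
  | brL C R, E => br (C.plug E) R
  | brR L C, E => br L (C.plug E)

def comp : Ctx A → Ctx A → Ctx A
  | hole, D => D
  | brL C R, D => brL (C.comp D) R
  | brR L C, D => brR L (C.comp D)

theorem plug_comp (C D : Ctx A) (E : LieExpr A) : (C.comp D).plug E = C.plug (D.plug E) := by
  induction C with
  | hole => rfl
  | brL C R ih => simp [comp, plug, ih]
  | brR L C ih => simp [comp, plug, ih]

def pre : Ctx A → List A
  | hole => []
  | brL C _ => C.pre
  | brR L C => L.letters ++ C.pre

def suf : Ctx A → List A
  | hole => []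
  | brL C R => C.suf ++ R.letters
  | brR _ C => C.suf

def size : Ctx A → ℕ → ℕ
  | hole, n => n
  | brL C R, n => C.size n + R.size
  | brR L C, n => L.size + C.size n

theorem letters_plug (C : Ctx A) (E : LieExpr A) :
    (C.plug E).letters = C.pre ++ E.letters ++ C.suf := by
  induction C with
  | hole => simp [plug, pre, suf]
  | brL C R ih => simp [plug, pre, suf, letters, ih]
  | brR L C ih => simp [plug, pre, suf, letters, ih]

theorem size_plug (C : Ctx A) (E : LieExpr A) : (C.plug E).size = C.size E.size := by
  induction C with
  | hole => rfl
  | brL C R ih => simp [plug, LieExpr.size, size, ih]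
  | brR L C ih => simp [plug, LieExpr.size, size, ih]

theorem length_pre_add_le_size (C : Ctx A) (n : ℕ) : C.pre.length + n ≤ C.size n := by
  induction C with
  | hole => simp [pre, size]
  | brL C R ih => simp only [pre, size]; omega
  | brR L C ih => simp only [pre, size, List.length_append, length_letters]; omega

end Ctx

end LieExpr

namespace LGraph

variable {A : Type*} (G : LGraph A)

def Joined (S T : Finset G.V) : Prop :=
  G.ConnOn S ∧ G.ConnOn T ∧ (G.between S T).card = 1

variable {G}

theorem between_comm (S T : Finset G.V) : G.between S T = G.between T S :=
  Finset.filter_congr fun _ _ => or_comm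

theorem joined_comm {S T : Finset G.V} : G.Joined S T ↔ G.Joined T S := by
  rw [Joined, Joined, between_comm]
  tauto

theorem card_between_union {S T₁ T₂ : Finset G.V} (h₁ : Disjoint S T₁) (h₂ : Disjoint S T₂)
    (h₁₂ : Disjoint T₁ T₂) :
    (G.between S (T₁ ∪ T₂)).card = (G.between S T₁).card + (G.between S T₂).card := by
  rw [← Finset.card_union_of_disjoint]
  · congr 1
    ext e
    simp only [between, Finset.mem_filter, Finset.mem_union]
    tauto
  · rw [Finset.disjoint_left] at h₁ h₂ h₁₂ ⊢
    simp only [between, Finset.mem_filter]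
    grind

theorem ConnOn.union {S T : Finset G.V} (hS : G.ConnOn S) (hT : G.ConnOn T)
    (hST : (G.between S T).Nonempty) : G.ConnOn (S ∪ T) := by
  obtain ⟨u, hu, v, hv, huv⟩ : ∃ u ∈ S, ∃ v ∈ T, (u, v) ∈ G.edges ∨ (v, u) ∈ G.edges := by
    obtain ⟨⟨x, y⟩, he⟩ := hST
    simp only [between, Finset.mem_filter] at he
    rcases he with ⟨he, ⟨hx, hy⟩ | ⟨hx, hy⟩⟩
    exacts [⟨x, hx, y, hy, .inl he⟩, ⟨y, hy, x, hx, .inr he⟩]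
  set r := fun a b => a ∈ S ∪ T ∧ b ∈ S ∪ T ∧ ((a, b) ∈ G.edges ∨ (b, a) ∈ G.edges)
  have : Std.Symm r := ⟨fun _ _ ⟨ha, hb, hab⟩ => ⟨hb, ha, hab.symm⟩⟩
  have lift {U : Finset G.V} (hU : U ⊆ S ∪ T) {a b : G.V}
      (h : Relation.ReflTransGen (fun a b => a ∈ U ∧ b ∈ U ∧
        ((a, b) ∈ G.edges ∨ (b, a) ∈ G.edges)) a b) : Relation.ReflTransGen r a b :=
    Relation.ReflTransGen.mono (fun _ _ h => ⟨hU h.1, hU h.2.1, h.2.2⟩) _ _ h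
  have to_u : ∀ z ∈ S ∪ T, Relation.ReflTransGen r z u := by
    intro z hz
    rcases Finset.mem_union.mp hz with hz | hz
    · exact lift Finset.subset_union_left (hS.2 z hz u hu)
    · refine (lift Finset.subset_union_right (hT.2 z hz v hv)).tail ?_
      exact ⟨Finset.mem_union_right _ hv, Finset.mem_union_left _ hu, huv.symm⟩
  exact ⟨hS.1.mono Finset.subset_union_left,
    fun a ha b hb => (to_u a ha).trans (Std.Symm.symm _ _ (to_u b hb))⟩

variable {S₁ S₂ S₃ : Finset G.V}

theorem Joined.card_between_eq_one_iff (h : G.Joined S₁ (S₂ ∪ S₃)) (h₁₂ : Disjoint S₁ S₂)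
    (h₁₃ : Disjoint S₁ S₃) (h₂₃ : Disjoint S₂ S₃) :
    (G.between S₁ S₂).card = 1 ↔ (G.between S₁ S₃).card ≠ 1 := by
  have := h.2.2
  rw [card_between_union h₁₂ h₁₃ h₂₃] at this
  omega

theorem joined_union_iff (h₁₂ : Disjoint S₁ S₂) (h₁₃ : Disjoint S₁ S₃) (h₂₃ : Disjoint S₂ S₃) :
    (G.Joined S₁ (S₂ ∪ S₃) ∧ G.Joined S₂ S₃ ∧ (G.between S₁ S₃).card = 1) ↔
      G.ConnOn S₁ ∧ G.ConnOn S₂ ∧ G.ConnOn S₃ ∧ (G.between S₁ S₂).card = 0 ∧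
        (G.between S₁ S₃).card = 1 ∧ (G.between S₂ S₃).card = 1 := by
  simp only [Joined, card_between_union h₁₂ h₁₃ h₂₃]
  constructor
  · rintro ⟨⟨c₁, -, b⟩, ⟨c₂, c₃, b₂₃⟩, b₁₃⟩
    exact ⟨c₁, c₂, c₃, by omega, b₁₃, b₂₃⟩
  · rintro ⟨c₁, c₂, c₃, b₁₂, b₁₃, b₂₃⟩
    exact ⟨⟨c₁, c₂.union c₃ (Finset.card_pos.mp (by omega)), by omega⟩, ⟨c₂, c₃, b₂₃⟩, b₁₃⟩

end LGraph

section Positions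

variable {A : Type*} {G : LGraph A} {N N' : ℕ}

theorem posSet_add (σ : G.V ≃ Fin N) (st l₁ l₂ : ℕ) :
    posSet G σ st (l₁ + l₂) = posSet G σ st l₁ ∪ posSet G σ (st + l₁) l₂ := by
  ext v
  simp only [posSet, Finset.mem_filter, Finset.mem_univ, true_and, Finset.mem_union]
  omega

theorem disjoint_posSet (σ : G.V ≃ Fin N) {st len st' len' : ℕ} (h : st + len ≤ st') :
    Disjoint (posSet G σ st len) (posSet G σ st' len') := by
  rw [Finset.disjoint_left]
  simp only [posSet, Finset.mem_filter, Finset.mem_univ, true_and]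
  omega

theorem posSet_trans (σ : G.V ≃ Fin N) (π : Fin N ≃ Fin N') {st len st' len' : ℕ}
    (h : ∀ x : Fin N,
      (st ≤ (π x : ℕ) ∧ (π x : ℕ) < st + len) ↔ (st' ≤ (x : ℕ) ∧ (x : ℕ) < st' + len')) :
    posSet G (σ.trans π) st len = posSet G σ st' len' := by
  ext v
  simp only [posSet, Finset.mem_filter, Finset.mem_univ, true_and]
  exact h (σ v)

variable (G) in
def GoodAt (σ : G.V ≃ Fin N) : LieExpr A → ℕ → Prop
  | .of _, _ => True
  | .br h k, j => G.Joined (posSet G σ j h.size) (posSet G σ (j + h.size) k.size) ∧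
      GoodAt σ h j ∧ GoodAt σ k (j + h.size)

theorem forall_intervals_iff_goodAt (σ : G.V ≃ Fin N) (X : LieExpr A) (j : ℕ) :
    (∀ q ∈ X.intervals j, G.Joined (posSet G σ q.1.1 q.1.2) (posSet G σ q.2.1 q.2.2)) ↔
      GoodAt G σ X j := by
  induction X generalizing j with
  | of => simp [LieExpr.intervals, GoodAt]
  | br h k ihh ihk =>
    simp only [LieExpr.intervals, List.forall_mem_cons, List.forall_mem_append, ihh, ihk, GoodAt]

theorem good_iff_goodAt (L : LieExpr A) (σ : G.V ≃ Fin L.letters.length) :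
    Good G L σ ↔ GoodAt G σ L 0 :=
  forall_intervals_iff_goodAt σ L 0

theorem goodAt_congr {σ : G.V ≃ Fin N} {σ' : G.V ≃ Fin N'} {X : LieExpr A} {j j' : ℕ}
    (h : ∀ i len, i + len ≤ X.size → posSet G σ' (j + i) len = posSet G σ (j' + i) len) :
    GoodAt G σ' X j ↔ GoodAt G σ X j' := by
  induction X generalizing j j' with
  | of => rfl
  | br H K ihH ihK =>
    simp only [LieExpr.size] at h
    have h₀ := h 0 H.size (by omega)
    have h₁ := h H.size K.size le_rfl
    simp only [add_zero] at h₀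
    rw [GoodAt, GoodAt, h₀, h₁, ihH fun i len hi => h i len (by omega),
      ihK (j' := j' + H.size) fun i len hi => by
        simpa only [add_assoc] using h (H.size + i) len (by omega)]

namespace LieExpr.Ctx

variable (G) in
def GoodAround (σ : G.V ≃ Fin N) : LieExpr.Ctx A → ℕ → ℕ → Prop
  | hole, _, _ => True
  | brL C R, n, j => G.Joined (posSet G σ j (C.size n)) (posSet G σ (j + C.size n) R.size) ∧
      GoodAround σ C n j ∧ GoodAt G σ R (j + C.size n)
  | brR L C, n, j => G.Joined (posSet G σ j L.size) (posSet G σ (j + L.size) (C.size n)) ∧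
      GoodAt G σ L j ∧ GoodAround σ C n (j + L.size)

theorem goodAt_plug (σ : G.V ≃ Fin N) (C : LieExpr.Ctx A) (E : LieExpr A) (j : ℕ) :
    GoodAt G σ (C.plug E) j ↔ C.GoodAround G σ E.size j ∧ GoodAt G σ E (j + C.pre.length) := by
  induction C generalizing j with
  | hole => simp [plug, GoodAround, pre]
  | brL C R ih =>
    simp only [plug, GoodAt, GoodAround, size_plug, ih, pre]
    tauto
  | brR L C ih =>
    simp only [plug, GoodAt, GoodAround, size_plug, ih, pre, List.length_append,
      LieExpr.length_letters, add_assoc]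
    tauto

theorem goodAround_congr {σ : G.V ≃ Fin N} {σ' : G.V ≃ Fin N'} {C : LieExpr.Ctx A} {n j s : ℕ}
    (hs : s = j + C.pre.length)
    (h : ∀ st len, st + len ≤ s ∨ s + n ≤ st ∨ (st ≤ s ∧ s + n ≤ st + len) →
      posSet G σ' st len = posSet G σ st len) :
    C.GoodAround G σ' n j ↔ C.GoodAround G σ n j := by
  induction C generalizing j with
  | hole => rfl
  | brL C R ih =>
    have := C.length_pre_add_le_size n
    simp only [pre] at hs
    rw [GoodAround, GoodAround, h j (C.size n) (by omega), h (j + C.size n) R.size (by omega),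
      ih hs, goodAt_congr fun i len _ => h (j + C.size n + i) len (by omega)]
  | brR L C ih =>
    have := C.length_pre_add_le_size n
    simp only [pre, List.length_append, LieExpr.length_letters] at hs
    rw [GoodAround, GoodAround, h j L.size (by omega), h (j + L.size) (C.size n) (by omega),
      ih (by omega), goodAt_congr fun i len _ => h (j + i) len (by omega)]

end LieExpr.Ctx

end Positions

/-- Exchanges the adjacent blocks of positions `[s, s + a)` and `[s + a, s + a + b)`. -/
def swapBlocks (s a b x : ℕ) : ℕ :=
  if s ≤ x ∧ x < s + a then x + b else if s + a ≤ x ∧ x < s + a + b then x - a else x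

theorem swapBlocks_swapBlocks (s a b x : ℕ) : swapBlocks s b a (swapBlocks s a b x) = x := by
  unfold swapBlocks
  split_ifs <;> omega

theorem swapBlocks_lt {s a b N x : ℕ} (h : s + a + b ≤ N) (hx : x < N) :
    swapBlocks s a b x < N := by
  unfold swapBlocks
  split_ifs <;> omega

theorem List.getElem?_swapBlocks {α : Type*} (p u w q : List α) (i : ℕ) :
    (p ++ (w ++ u) ++ q)[swapBlocks p.length u.length w.length i]? =
      (p ++ (u ++ w) ++ q)[i]? := by
  unfold swapBlocks
  split_ifs <;> simp only [List.getElem?_append, List.length_append] <;>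
    split_ifs <;> first | rfl | omega | (congr 1; omega)

section SwapBlocks

variable {A : Type*} {G : LGraph A} {N N' : ℕ} {σ : G.V ≃ Fin N} {π : Fin N ≃ Fin N'}
  {s a b : ℕ}

theorem posSet_trans_swapBlocks (hπ : ∀ x, (π x : ℕ) = swapBlocks s a b x) {st len : ℕ}
    (h : st + len ≤ s ∨ s + a + b ≤ st ∨ (st ≤ s ∧ s + a + b ≤ st + len)) :
    posSet G (σ.trans π) st len = posSet G σ st len :=
  posSet_trans σ π fun x => by rw [hπ]; unfold swapBlocks; split_ifs <;> omega

theorem posSet_trans_swapBlocks_left (hπ : ∀ x, (π x : ℕ) = swapBlocks s a b x)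
    {st st' len : ℕ} (h₁ : s ≤ st) (h₂ : st + len ≤ s + b) (h : st' = st + a) :
    posSet G (σ.trans π) st len = posSet G σ st' len :=
  posSet_trans σ π fun x => by rw [hπ]; unfold swapBlocks; split_ifs <;> omega

theorem posSet_trans_swapBlocks_right (hπ : ∀ x, (π x : ℕ) = swapBlocks s a b x)
    {st st' len : ℕ} (h₁ : s + b ≤ st) (h₂ : st + len ≤ s + a + b) (h : st = st' + b) :
    posSet G (σ.trans π) st len = posSet G σ st' len :=
  posSet_trans σ π fun x => by rw [hπ]; unfold swapBlocks; split_ifs <;> omega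

theorem goodAt_trans_swapBlocks_left (hπ : ∀ x, (π x : ℕ) = swapBlocks s a b x)
    {X : LieExpr A} {j j' : ℕ} (h₁ : s ≤ j) (h₂ : j + X.size ≤ s + b) (h : j' = j + a) :
    GoodAt G (σ.trans π) X j ↔ GoodAt G σ X j' :=
  goodAt_congr fun _ _ _ => posSet_trans_swapBlocks_left hπ (by omega) (by omega) (by omega)

theorem goodAt_trans_swapBlocks_right (hπ : ∀ x, (π x : ℕ) = swapBlocks s a b x)
    {X : LieExpr A} {j j' : ℕ} (h₁ : s + b ≤ j) (h₂ : j + X.size ≤ s + a + b) (h : j = j' + b) :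
    GoodAt G (σ.trans π) X j ↔ GoodAt G σ X j' :=
  goodAt_congr fun _ _ _ => posSet_trans_swapBlocks_right hπ (by omega) (by omega) (by omega)

/-- Swapping two adjacent blocks reverses the orientation of exactly the edges between them. -/
theorem neg_one_pow_card_inversions_trans_swapBlocks
    (hπ : ∀ x, (π x : ℕ) = swapBlocks s a b x) :
    (-1 : ℤ) ^ (G.edges.filter fun e => ((σ.trans π) e.2 : ℕ) < ((σ.trans π) e.1 : ℕ)).card =
      (-1) ^ (G.between (posSet G σ s a) (posSet G σ (s + a) b)).card *
        (-1) ^ (G.edges.filter fun e => (σ e.2 : ℕ) < (σ e.1 : ℕ)).card := by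
  rw [LGraph.between, ← Finset.prod_const, ← Finset.prod_const, ← Finset.prod_const,
    Finset.prod_filter, Finset.prod_filter, Finset.prod_filter, ← Finset.prod_mul_distrib]
  refine Finset.prod_congr rfl fun e _ => ?_
  simp only [posSet, Finset.mem_filter, Finset.mem_univ, true_and, Equiv.trans_apply, hπ]
  unfold swapBlocks
  split_ifs <;> omega

end SwapBlocks

section Pairing

variable {A : Type*} (G : LGraph A)

noncomputable def pairingOn (L : LieExpr A) (Q : (G.V ≃ Fin L.letters.length) → Prop) : ℤ :=
  ∑ σ ∈ Bijections G L, if Good G L σ ∧ Q σ then pairingAt G L σ else 0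

variable {G}

theorem pairing_eq_pairingOn (L : LieExpr A) : pairing G L = pairingOn G L fun _ => True := by
  refine Finset.sum_congr rfl fun σ _ => ?_
  by_cases h : Good G L σ <;> simp [pairingAt, h]

theorem pairing_eq_pairingOn_add_pairingOn {L : LieExpr A}
    {Q₁ Q₂ : (G.V ≃ Fin L.letters.length) → Prop} (h : ∀ σ, Good G L σ → (Q₁ σ ↔ ¬Q₂ σ)) :
    pairing G L = pairingOn G L Q₁ + pairingOn G L Q₂ := by
  rw [pairingOn, pairingOn, ← Finset.sum_add_distrib]
  refine Finset.sum_congr rfl fun σ _ => ?_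
  by_cases hσ : Good G L σ
  · by_cases hQ : Q₁ σ <;> simp [hσ, hQ, (h σ hσ).mp, (h σ hσ).not_left.mp]
  · simp [pairingAt, hσ]

theorem pairingOn_trans {L L' : LieExpr A} (π : Fin L.letters.length ≃ Fin L'.letters.length)
    (hπ : ∀ i, L'.letters.get (π i) = L.letters.get i)
    {Q : (G.V ≃ Fin L.letters.length) → Prop} {Q' : (G.V ≃ Fin L'.letters.length) → Prop}
    (hQ : ∀ σ, (Good G L' (σ.trans π) ∧ Q' (σ.trans π)) ↔ (Good G L σ ∧ Q σ))
    (hsign : ∀ σ, Good G L σ → Q σ → pairingAt G L' (σ.trans π) = -pairingAt G L σ) :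
    pairingOn G L' Q' = -pairingOn G L Q := by
  have hmem (σ : G.V ≃ Fin L.letters.length) :
      σ.trans π ∈ Bijections G L' ↔ σ ∈ Bijections G L := by
    simp only [Bijections, Finset.mem_filter, Finset.mem_univ, true_and, Equiv.trans_apply, hπ]
  rw [pairingOn, pairingOn, ← Finset.sum_neg_distrib]
  symm
  refine Finset.sum_nbij' (fun σ => σ.trans π) (fun τ => τ.trans π.symm)
    (fun σ hσ => (hmem σ).mpr hσ)
    (fun τ hτ => (hmem _).mp (by rwa [show (τ.trans π.symm).trans π = τ by ext; simp]))
    (fun σ _ => by ext; simp) (fun τ _ => by ext; simp) fun σ _ => ?_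
  simp only [hQ]
  split_ifs with h
  · exact (hsign σ h.1 h.2).symm
  · exact neg_zero

end Pairing

namespace LieExpr.Ctx

variable {A : Type*} {G : LGraph A} (C : Ctx A)

section PlugSwap

variable (X Y : LieExpr A) {E' : LieExpr A} (hE' : E'.letters = Y.letters ++ X.letters)

theorem length_pre_add_add_le :
    C.pre.length + X.size + Y.size ≤ (C.plug (.br X Y)).letters.length := by
  simp only [letters_plug, letters, List.length_append, length_letters]
  omega

theorem length_letters_plug_eq (hE' : E'.letters = Y.letters ++ X.letters) :
    (C.plug E').letters.length = (C.plug (.br X Y)).letters.length := by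
  simp only [letters_plug, hE', letters, List.length_append]
  omega

/-- The permutation of positions of `C[[X,Y]]` exchanging the blocks of `X` and of `Y`, read as
positions of an expression `C[E']` where `E'` has the letters of `Y` followed by those of `X`. -/
def plugSwap : Fin (C.plug (.br X Y)).letters.length ≃ Fin (C.plug E').letters.length where
  toFun i := ⟨swapBlocks C.pre.length X.size Y.size i,
    (swapBlocks_lt (length_pre_add_add_le C X Y) i.2).trans_eq
      (length_letters_plug_eq C X Y hE').symm⟩
  invFun i := ⟨swapBlocks C.pre.length Y.size X.size i,
    swapBlocks_lt (by have := length_pre_add_add_le C X Y; omega)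
      (i.2.trans_eq (length_letters_plug_eq C X Y hE'))⟩
  left_inv i := Fin.ext (swapBlocks_swapBlocks _ _ _ _)
  right_inv i := Fin.ext (swapBlocks_swapBlocks _ _ _ _)

theorem coe_plugSwap (i : Fin (C.plug (.br X Y)).letters.length) :
    (C.plugSwap X Y hE' i : ℕ) = swapBlocks C.pre.length X.size Y.size i :=
  rfl

theorem get_letters_plugSwap (i : Fin (C.plug (.br X Y)).letters.length) :
    (C.plug E').letters.get (C.plugSwap X Y hE' i) = (C.plug (.br X Y)).letters.get i := by
  have h := List.getElem?_swapBlocks C.pre X.letters Y.letters C.suf i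
  change _ = (C.pre ++ (br X Y).letters ++ C.suf)[(i : ℕ)]? at h
  rw [← hE', length_letters, length_letters, ← letters_plug,
    ← letters_plug] at h
  change (C.plug E').letters[(C.plugSwap X Y hE' i : ℕ)]? = _ at h
  rw [List.getElem?_eq_getElem (C.plugSwap X Y hE' i).2, List.getElem?_eq_getElem i.2] at h
  exact Option.some_injective _ h

theorem pairingAt_trans_plugSwap {σ : G.V ≃ Fin (C.plug (.br X Y)).letters.length}
    (hσ : Good G (C.plug (.br X Y)) σ) (hσ' : Good G (C.plug E') (σ.trans (C.plugSwap X Y hE'))) :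
    pairingAt G (C.plug E') (σ.trans (C.plugSwap X Y hE')) = -pairingAt G (C.plug (.br X Y)) σ := by
  have hXY : (G.between (posSet G σ C.pre.length X.size)
      (posSet G σ (C.pre.length + X.size) Y.size)).card = 1 := by
    rw [good_iff_goodAt, goodAt_plug, zero_add] at hσ
    exact hσ.2.1.2.2
  rw [pairingAt, pairingAt, if_pos hσ, if_pos hσ',
    neg_one_pow_card_inversions_trans_swapBlocks (C.coe_plugSwap X Y hE'), hXY]
  ring

theorem pairingOn_plugSwap {Q : (G.V ≃ Fin (C.plug (.br X Y)).letters.length) → Prop}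
    {Q' : (G.V ≃ Fin (C.plug E').letters.length) → Prop}
    (h : ∀ σ, (GoodAt G (σ.trans (C.plugSwap X Y hE')) E' C.pre.length ∧
      Q' (σ.trans (C.plugSwap X Y hE'))) ↔ (GoodAt G σ (.br X Y) C.pre.length ∧ Q σ)) :
    pairingOn G (C.plug E') Q' = -pairingOn G (C.plug (.br X Y)) Q := by
  have hsize : E'.size = (br X Y).size := by
    rw [← length_letters, hE', List.length_append, length_letters, length_letters, LieExpr.size]
    omega
  have hgood (σ) : (Good G (C.plug E') (σ.trans (C.plugSwap X Y hE')) ∧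
      Q' (σ.trans (C.plugSwap X Y hE'))) ↔ (Good G (C.plug (.br X Y)) σ ∧ Q σ) := by
    rw [good_iff_goodAt, good_iff_goodAt, goodAt_plug, goodAt_plug, zero_add, hsize,
      goodAround_congr (zero_add _).symm fun st len hst =>
        posSet_trans_swapBlocks (C.coe_plugSwap X Y hE')
          (by simp only [LieExpr.size] at hst; omega),
      and_assoc, and_assoc, h]
  exact pairingOn_trans _ (C.get_letters_plugSwap X Y hE') hgood
    fun σ hσ hQ => C.pairingAt_trans_plugSwap X Y hE' hσ ((hgood σ).mpr ⟨hσ, hQ⟩).1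

end PlugSwap

theorem pairing_plug_br_add_pairing_plug_br (H K : LieExpr A) :
    pairing G (C.plug (.br H K)) + pairing G (C.plug (.br K H)) = 0 := by
  rw [pairing_eq_pairingOn, pairing_eq_pairingOn,
    C.pairingOn_plugSwap H K (E' := .br K H) rfl fun σ => ?_, add_neg_cancel]
  have hπ := C.coe_plugSwap H K (E' := .br K H) rfl
  simp only [and_true, GoodAt]
  rw [posSet_trans_swapBlocks_left hπ le_rfl (by omega) rfl,
    posSet_trans_swapBlocks_right hπ le_rfl (by omega) rfl,
    goodAt_trans_swapBlocks_left hπ le_rfl (by omega) rfl,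
    goodAt_trans_swapBlocks_right hπ le_rfl (by omega) rfl, LGraph.joined_comm]
  tauto

theorem pairingOn_plug_br_br_rotate (X Y Z : LieExpr A) :
    pairingOn G (C.plug (.br Y (.br Z X))) (fun σ => (G.between (posSet G σ C.pre.length Y.size)
      (posSet G σ (C.pre.length + Y.size) Z.size)).card = 1) =
    -pairingOn G (C.plug (.br X (.br Y Z))) (fun σ => (G.between (posSet G σ C.pre.length X.size)
      (posSet G σ (C.pre.length + X.size + Y.size) Z.size)).card = 1) := by
  refine C.pairingOn_plugSwap X (.br Y Z) (E' := .br Y (.br Z X)) (by simp [letters]) fun σ => ?_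
  set s := C.pre.length
  have hπ : ∀ x, (C.plugSwap X (.br Y Z) (E' := .br Y (.br Z X)) (by simp [letters]) x : ℕ) =
      swapBlocks s X.size (Y.size + Z.size) x := fun _ => rfl
  simp only [GoodAt, LieExpr.size]
  rw [posSet_add (σ.trans _) (s + Y.size) Z.size X.size, posSet_add σ (s + X.size) Y.size Z.size,
    posSet_trans_swapBlocks_left hπ le_rfl (by omega) rfl,
    posSet_trans_swapBlocks_left hπ (st := s + Y.size) (st' := s + X.size + Y.size)
      (by omega) (by omega) (by omega),
    posSet_trans_swapBlocks_right hπ (st := s + Y.size + Z.size) (st' := s)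
      (by omega) (by omega) (by omega),
    goodAt_trans_swapBlocks_left hπ le_rfl (by omega) rfl,
    goodAt_trans_swapBlocks_left hπ (j := s + Y.size) (j' := s + X.size + Y.size)
      (by omega) (by omega) (by omega),
    goodAt_trans_swapBlocks_right hπ (j := s + Y.size + Z.size) (j' := s)
      (by omega) (by omega) (by omega),
    Finset.union_comm (posSet G σ (s + X.size + Y.size) Z.size),
    LGraph.joined_comm (T := posSet G σ s X.size)]
  set SX := posSet G σ s X.size
  set SY := posSet G σ (s + X.size) Y.size
  set SZ := posSet G σ (s + X.size + Y.size) Z.size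
  have dXY : Disjoint SX SY := disjoint_posSet σ le_rfl
  have dXZ : Disjoint SX SZ := disjoint_posSet σ (by omega)
  have dYZ : Disjoint SY SZ := disjoint_posSet σ le_rfl
  have e₁ := LGraph.joined_union_iff dXY dXZ dYZ
  have e₂ := LGraph.joined_union_iff dXY.symm dYZ dXZ
  rw [LGraph.between_comm SY SX] at e₂
  constructor
  · rintro ⟨⟨jYXZ, gY, jXZ, gZ, gX⟩, bYZ⟩
    obtain ⟨cY, cX, cZ, bXY, -, bXZ⟩ := e₂.mp ⟨jYXZ, jXZ, bYZ⟩
    obtain ⟨jXYZ, jYZ, -⟩ := e₁.mpr ⟨cX, cY, cZ, bXY, bXZ, bYZ⟩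
    exact ⟨⟨jXYZ, gX, jYZ, gY, gZ⟩, bXZ⟩
  · rintro ⟨⟨jXYZ, gX, jYZ, gY, gZ⟩, bXZ⟩
    obtain ⟨cX, cY, cZ, bXY, -, bYZ⟩ := e₁.mp ⟨jXYZ, jYZ, bXZ⟩
    obtain ⟨jYXZ, jXZ, -⟩ := e₂.mpr ⟨cY, cX, cZ, bXY, bYZ, bXZ⟩
    exact ⟨⟨jYXZ, gY, jXZ, gZ, gX⟩, bYZ⟩

theorem pairing_plug_br_br_eq_add (X Y Z : LieExpr A) :
    pairing G (C.plug (.br X (.br Y Z))) =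
      pairingOn G (C.plug (.br X (.br Y Z))) (fun σ => (G.between (posSet G σ C.pre.length X.size)
        (posSet G σ (C.pre.length + X.size) Y.size)).card = 1) +
      pairingOn G (C.plug (.br X (.br Y Z))) (fun σ => (G.between (posSet G σ C.pre.length X.size)
        (posSet G σ (C.pre.length + X.size + Y.size) Z.size)).card = 1) := by
  refine pairing_eq_pairingOn_add_pairingOn fun σ hσ => ?_
  rw [good_iff_goodAt, goodAt_plug, zero_add] at hσ
  have hX := hσ.2.1
  rw [LieExpr.size, posSet_add] at hX
  exact hX.card_between_eq_one_iff (disjoint_posSet σ le_rfl) (disjoint_posSet σ (by omega))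
    (disjoint_posSet σ le_rfl)

theorem pairing_plug_jacobi (H K M : LieExpr A) :
    pairing G (C.plug (.br H (.br K M))) + pairing G (C.plug (.br M (.br H K))) +
      pairing G (C.plug (.br K (.br M H))) = 0 := by
  rw [C.pairing_plug_br_br_eq_add H K M, C.pairing_plug_br_br_eq_add M H K,
    C.pairing_plug_br_br_eq_add K M H]
  linarith [C.pairingOn_plug_br_br_rotate (G := G) H K M,
    C.pairingOn_plug_br_br_rotate (G := G) M H K, C.pairingOn_plug_br_br_rotate (G := G) K M H]

theorem pairing_plug_br_self (U : LieExpr A) : pairing G (C.plug (.br U U)) = 0 := by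
  have := C.pairing_plug_br_add_pairing_plug_br (G := G) U U
  omega

theorem pairing_plug_leibniz (U V W : LieExpr A) :
    pairing G (C.plug (.br U (.br V W))) =
      pairing G (C.plug (.br (.br U V) W)) + pairing G (C.plug (.br V (.br U W))) := by
  have hVWU := (C.comp (brR V hole)).pairing_plug_br_add_pairing_plug_br (G := G) W U
  simp only [plug_comp, plug] at hVWU
  linarith [C.pairing_plug_jacobi (G := G) U V W,
    C.pairing_plug_br_add_pairing_plug_br (G := G) W (.br U V)]

end LieExpr.Ctx

namespace FreeLieAlgebra

open MonoidAlgebra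

variable {R X : Type*} [CommRing R]

noncomputable def extendMagma (p : FreeMagma X → R) : FreeNonUnitalNonAssocAlgebra R X →ₗ[R] R :=
  (MonoidAlgebra.basis (FreeMagma X) R).constr R p

variable {p : FreeMagma X → R}

theorem extendMagma_single (w : FreeMagma X) (r : R) : extendMagma p (single w r) = r * p w := by
  rw [← mul_one r, ← smul_single', map_smul, ← basis_apply, extendMagma, Module.Basis.constr_basis,
    smul_eq_mul, mul_one]

theorem extendMagma_single_mul (u : FreeMagma X) (r : R) (y : FreeNonUnitalNonAssocAlgebra R X) :
    extendMagma p (single u r * y) = r * extendMagma (fun w => p (u * w)) y := by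
  induction y using MonoidAlgebra.induction_linear with
  | zero => simp
  | add y z hy hz => rw [mul_add, map_add, map_add, hy, hz, mul_add]
  | single w t => rw [single_mul_single, extendMagma_single, extendMagma_single, mul_assoc]

theorem extendMagma_mul_single (v : FreeMagma X) (r : R) (x : FreeNonUnitalNonAssocAlgebra R X) :
    extendMagma p (x * single v r) = r * extendMagma (fun w => p (w * v)) x := by
  induction x using MonoidAlgebra.induction_linear with
  | zero => simp
  | add x z hx hz => rw [add_mul, map_add, map_add, hx, hz, mul_add]
  | single w t => rw [single_mul_single, extendMagma_single, extendMagma_single]; ring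

theorem extendMagma_mul_add_mul (hanti : ∀ u v, p (u * v) + p (v * u) = 0)
    (a b : FreeNonUnitalNonAssocAlgebra R X) :
    extendMagma p (a * b) + extendMagma p (b * a) = 0 := by
  induction a using MonoidAlgebra.induction_linear with
  | zero => simp
  | add x z hx hz => rw [add_mul, mul_add, map_add, map_add]; linear_combination hx + hz
  | single u r =>
    induction b using MonoidAlgebra.induction_linear with
    | zero => simp
    | add x z hx hz => rw [add_mul, mul_add, map_add, map_add]; linear_combination hx + hz
    | single v t =>
      rw [single_mul_single, single_mul_single, extendMagma_single, extendMagma_single, mul_comm t]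
      linear_combination (r * t) * hanti u v

theorem extendMagma_mul_self (hself : ∀ u, p (u * u) = 0)
    (hanti : ∀ u v, p (u * v) + p (v * u) = 0) (a : FreeNonUnitalNonAssocAlgebra R X) :
    extendMagma p (a * a) = 0 := by
  induction a using MonoidAlgebra.induction_linear with
  | zero => simp
  | add x z hx hz =>
    rw [add_mul, mul_add, mul_add, map_add, map_add, map_add, hx, hz]
    linear_combination extendMagma_mul_add_mul hanti z x
  | single u r => rw [single_mul_single, extendMagma_single, hself, mul_zero]

theorem extendMagma_leibniz (hleib : ∀ u v w, p (u * (v * w)) = p (u * v * w) + p (v * (u * w)))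
    (a b c : FreeNonUnitalNonAssocAlgebra R X) :
    extendMagma p (a * (b * c)) = extendMagma p (a * b * c) + extendMagma p (b * (a * c)) := by
  induction a using MonoidAlgebra.induction_linear with
  | zero => simp
  | add x z hx hz => simp only [add_mul, mul_add, map_add, hx, hz]; ring
  | single u r =>
    induction b using MonoidAlgebra.induction_linear with
    | zero => simp
    | add x z hx hz => simp only [add_mul, mul_add, map_add, hx, hz]; ring
    | single v s =>
      induction c using MonoidAlgebra.induction_linear with
      | zero => simp
      | add x z hx hz => simp only [mul_add, map_add, hx, hz]; ring
      | single w t =>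
        simp only [single_mul_single, extendMagma_single, hleib u v w]
        ring

theorem exists_linearMap_of_magma (P : Set (FreeMagma X → R))
    (hleft : ∀ p ∈ P, ∀ u, (fun w => p (u * w)) ∈ P)
    (hright : ∀ p ∈ P, ∀ u, (fun w => p (w * u)) ∈ P)
    (hself : ∀ p ∈ P, ∀ u, p (u * u) = 0) (hanti : ∀ p ∈ P, ∀ u v, p (u * v) + p (v * u) = 0)
    (hleib : ∀ p ∈ P, ∀ u v w, p (u * (v * w)) = p (u * v * w) + p (v * (u * w)))
    (hp : p ∈ P) :
    ∃ φ : FreeLieAlgebra R X →ₗ[R] R, ∀ w, φ (Quot.mk _ (single w 1)) = p w := by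
  have hrel {x y} (h : Rel R X x y) : ∀ p ∈ P, extendMagma p x = extendMagma p y := by
    induction h with
    | lie_self a =>
      exact fun p hp => by rw [map_zero, extendMagma_mul_self (hself p hp) (hanti p hp)]
    | leibniz_lie a b c => exact fun p hp => by rw [map_add, extendMagma_leibniz (hleib p hp)]
    | smul t _ ih => exact fun p hp => by rw [map_smul, map_smul, ih p hp]
    | add_right c _ ih => exact fun p hp => by rw [map_add, map_add, ih p hp]
    | mul_left a _ ih =>
      intro p hp
      induction a using MonoidAlgebra.induction_linear with
      | zero => simp
      | add x z hx hz => rw [add_mul, add_mul, map_add, map_add, hx, hz]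
      | single u r => rw [extendMagma_single_mul, extendMagma_single_mul, ih _ (hleft p hp u)]
    | mul_right c _ ih =>
      intro p hp
      induction c using MonoidAlgebra.induction_linear with
      | zero => simp
      | add x z hx hz => rw [mul_add, mul_add, map_add, map_add, hx, hz]
      | single u r => rw [extendMagma_mul_single, extendMagma_mul_single, ih _ (hright p hp u)]
  refine ⟨{ toFun := Quot.lift (extendMagma p) fun x y h => hrel h p hp
            map_add' := ?_, map_smul' := ?_ }, fun w => ?_⟩
  · rintro ⟨x⟩ ⟨y⟩
    exact map_add (extendMagma p) x y
  · rintro t ⟨x⟩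
    exact map_smul (extendMagma p) t x
  · exact (extendMagma_single w 1).trans (one_mul _)

end FreeLieAlgebra

namespace LieExpr

variable {A : Type*}

def toFreeMagma : LieExpr A → FreeMagma A
  | of a => FreeMagma.of a
  | br h k => h.toFreeMagma * k.toFreeMagma

def ofFreeMagma : FreeMagma A → LieExpr A
  | .of a => of a
  | .mul u v => br (ofFreeMagma u) (ofFreeMagma v)

theorem ofFreeMagma_mul (u v : FreeMagma A) :
    ofFreeMagma (u * v) = br (ofFreeMagma u) (ofFreeMagma v) := rfl

theorem ofFreeMagma_toFreeMagma (L : LieExpr A) : ofFreeMagma L.toFreeMagma = L := by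
  induction L with
  | of => rfl
  | br h k ihh ihk => exact congrArg₂ br ihh ihk

theorem toLie_eq_mk (L : LieExpr A) :
    L.toLie = Quot.mk _ (MonoidAlgebra.single L.toFreeMagma 1) := by
  induction L with
  | of => rfl
  | br h k ihh ihk =>
    rw [toLie, ihh, ihk, toFreeMagma]
    change Quot.mk _ (MonoidAlgebra.single _ 1 * MonoidAlgebra.single _ 1) = _
    rw [MonoidAlgebra.single_mul_single, one_mul]

end LieExpr

open LieExpr in
theorem LGraph.exists_linearMap_toLie_eq_pairing {A : Type*} (G : LGraph A) :
    ∃ φ : FreeLieAlgebra ℚ A →ₗ[ℚ] ℚ, ∀ L : LieExpr A, φ L.toLie = (pairing G L : ℚ) := by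
  obtain ⟨φ, hφ⟩ := FreeLieAlgebra.exists_linearMap_of_magma
    (Set.range fun (C : Ctx A) w => (pairing G (C.plug (ofFreeMagma w)) : ℚ))
    (Set.forall_mem_range.mpr fun C u => ⟨C.comp (.brR (ofFreeMagma u) .hole), by
      ext; simp only [Ctx.plug_comp, Ctx.plug, ofFreeMagma_mul]⟩)
    (Set.forall_mem_range.mpr fun C u => ⟨C.comp (.brL .hole (ofFreeMagma u)), by
      ext; simp only [Ctx.plug_comp, Ctx.plug, ofFreeMagma_mul]⟩)
    (Set.forall_mem_range.mpr fun C u => by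
      exact_mod_cast C.pairing_plug_br_self (ofFreeMagma u))
    (Set.forall_mem_range.mpr fun C u v => by
      exact_mod_cast C.pairing_plug_br_add_pairing_plug_br (ofFreeMagma u) (ofFreeMagma v))
    (Set.forall_mem_range.mpr fun C u v w => by
      exact_mod_cast C.pairing_plug_leibniz (ofFreeMagma u) (ofFreeMagma v) (ofFreeMagma w))
    ⟨.hole, rfl⟩
  exact ⟨φ, fun L => by rw [L.toLie_eq_mk, hφ]; simp only [Ctx.plug, ofFreeMagma_toFreeMagma]⟩

/-- **The configuration pairing vanishes on the Lie relations**: for every finite directed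
labeled graph `G`, the pairing `⟨G, −⟩` vanishes on anti-commutativity and Jacobi
combinations of Lie bracket expressions; consequently it induces a well-defined linear
functional on the free Lie algebra on the alphabet. -/
theorem pairing_liftsToFreeLie {A : Type*} (G : LGraph A) :
    (∀ H K : LieExpr A, pairing G (.br H K) + pairing G (.br K H) = 0) ∧
    (∀ H K M : LieExpr A,
      pairing G (.br H (.br K M)) + pairing G (.br M (.br H K)) +
        pairing G (.br K (.br M H)) = 0) ∧
    ∃ φ : FreeLieAlgebra ℚ A →ₗ[ℚ] ℚ,
      ∀ L : LieExpr A, φ L.toLie = (pairing G L : ℚ) :=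
  ⟨LieExpr.Ctx.hole.pairing_plug_br_add_pairing_plug_br, LieExpr.Ctx.hole.pairing_plug_jacobi,
    G.exists_linearMap_toLie_eq_pairing⟩
end
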